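/- Let μ be a finite measure on X and f ∈ L¹(μ) with f ≥ 0. If g_k : X → [0,1] is a nondecreasing sequence of measurable functions with g_k → 1 μ-a.e. on {f > 0}, and ∫ g_k f dμ → ∫ f dμ, then ∫ g_k f log(c_k g_k f) dμ → ∫ f log f dμ for any sequence c_k → 1 of positive reals, where the convention 0 log 0 = 0 is used and f log f ∈ L¹(μ) is assumed. -/

import Mathlib

open MeasureTheory Filter

/-!
Since `c * t` only shifts `t * log t` by `log c * t`, the integral splits as
`∫ h_k log h_k + log c_k ∫ h_k` with `h_k = g_k f`. The second term tends to `0 · ∫ f`. For the first,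
`0 ≤ h_k ≤ f` gives the domination `|h_k log h_k| ≤ 1 + |f log f|` (use `|t log t| ≤ 1` on `[0, 1]`
and monotonicity of `t log t` on `[1, ∞)`), which is integrable on a finite measure space, so dominated
convergence applies.
-/

open Real Topology

lemma abs_mul_log_le_one_add_of_le {t s : ℝ} (ht : 0 ≤ t) (hts : t ≤ s) :
    |t * log t| ≤ 1 + |s * log s| := by
  rcases le_or_gt t 1 with ht1 | ht1
  · calc |t * log t| ≤ 1 := by
          rcases ht.eq_or_lt with rfl | ht0
          · simp
          · rw [mul_comm]; exact (abs_log_mul_self_lt t ht0 ht1).le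
      _ ≤ 1 + |s * log s| := le_add_of_nonneg_right (abs_nonneg _)
  · have hlog0 : 0 ≤ log t := log_nonneg ht1.le
    calc |t * log t| = t * log t := abs_of_nonneg (mul_nonneg ht hlog0)
      _ ≤ s * log s := mul_le_mul hts (log_le_log (by linarith) hts) hlog0 (by linarith)
      _ ≤ 1 + |s * log s| := (le_abs_self _).trans (le_add_of_nonneg_left zero_le_one)

lemma mul_log_const_mul {c : ℝ} (hc : c ≠ 0) (t : ℝ) :
    t * log (c * t) = t * log t + log c * t := by
  rcases eq_or_ne t 0 with rfl | ht
  · simp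
  · rw [log_mul hc ht]; ring

section

variable {X : Type*} [MeasurableSpace X] {μ : Measure X}

lemma integrable_mul_log_of_le [IsFiniteMeasure μ] {f h : X → ℝ}
    (hflogf : Integrable (fun x => f x * log (f x)) μ) (hmeas : AEMeasurable h μ)
    (h0 : ∀ᵐ x ∂μ, 0 ≤ h x) (hle : ∀ᵐ x ∂μ, h x ≤ f x) :
    Integrable (fun x => h x * log (h x)) μ :=
  ((integrable_const 1).add hflogf.abs).mono'
    (hmeas.mul (measurable_log.comp_aemeasurable hmeas)).aestronglyMeasurable
    (by filter_upwards [h0, hle] with x hx0 hxf using abs_mul_log_le_one_add_of_le hx0 hxf)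

theorem tendsto_integral_mul_log_of_le {ι : Type*} {l : Filter ι} [l.IsCountablyGenerated]
    [IsFiniteMeasure μ] {f : X → ℝ} {h : ι → X → ℝ}
    (hflogf : Integrable (fun x => f x * log (f x)) μ) (hmeas : ∀ i, AEMeasurable (h i) μ)
    (h0 : ∀ i, ∀ᵐ x ∂μ, 0 ≤ h i x) (hle : ∀ i, ∀ᵐ x ∂μ, h i x ≤ f x)
    (hlim : ∀ᵐ x ∂μ, Tendsto (fun i => h i x) l (𝓝 (f x))) :
    Tendsto (fun i => ∫ x, h i x * log (h i x) ∂μ) l (𝓝 (∫ x, f x * log (f x) ∂μ)) :=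
  tendsto_integral_filter_of_dominated_convergence (fun x => 1 + |f x * log (f x)|)
    (Eventually.of_forall fun i => (integrable_mul_log_of_le hflogf (hmeas i) (h0 i) (hle i)).1)
    (Eventually.of_forall fun i => by
      filter_upwards [h0 i, hle i] with x hx0 hxf using abs_mul_log_le_one_add_of_le hx0 hxf)
    ((integrable_const 1).add hflogf.abs)
    (by filter_upwards [hlim] with x hx using (continuous_mul_log.tendsto (f x)).comp hx)

lemma integral_mul_log_const_mul {h : X → ℝ} {c : ℝ} (hc : c ≠ 0) (hh : Integrable h μ)
    (hhlogh : Integrable (fun x => h x * log (h x)) μ) :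
    ∫ x, h x * log (c * h x) ∂μ = ∫ x, h x * log (h x) ∂μ + log c * ∫ x, h x ∂μ := by
  simp_rw [mul_log_const_mul hc]
  rw [integral_add hhlogh (hh.const_mul _), integral_const_mul]

end

theorem entropy_convergence_general {X : Type*} [MeasurableSpace X] (μ : Measure X)
    [IsFiniteMeasure μ] (f : X → ℝ) (hf : Integrable f μ) (hf0 : ∀ x, 0 ≤ f x)
    (g : ℕ → X → ℝ) (hgmeas : ∀ k, Measurable (g k))
    (hg01 : ∀ k x, g k x ∈ Set.Icc (0:ℝ) 1)
    (hglim : ∀ᵐ x ∂μ, 0 < f x → Tendsto (fun k => g k x) atTop (nhds 1))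
    (hgf : Tendsto (fun k => ∫ x, g k x * f x ∂μ) atTop (nhds (∫ x, f x ∂μ)))
    (c : ℕ → ℝ) (hc : ∀ k, 0 < c k) (hclim : Tendsto c atTop (nhds 1))
    (hflogf : Integrable (fun x => f x * Real.log (f x)) μ) :
    Tendsto (fun k => ∫ x, g k x * f x * Real.log (c k * g k x * f x) ∂μ)
      atTop (nhds (∫ x, f x * Real.log (f x) ∂μ)) := by
  have h0 : ∀ k, ∀ᵐ x ∂μ, 0 ≤ g k x * f x := fun k =>
    ae_of_all _ fun x => mul_nonneg (hg01 k x).1 (hf0 x)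
  have hle : ∀ k, ∀ᵐ x ∂μ, g k x * f x ≤ f x := fun k =>
    ae_of_all _ fun x => mul_le_of_le_one_left (hf0 x) (hg01 k x).2
  have hmeas : ∀ k, AEMeasurable (fun x => g k x * f x) μ := fun k =>
    (hgmeas k).aemeasurable.mul hf.aemeasurable
  have hlim : ∀ᵐ x ∂μ, Tendsto (fun k => g k x * f x) atTop (𝓝 (f x)) := by
    filter_upwards [hglim] with x hx
    rcases (hf0 x).eq_or_lt with hfx | hfx
    · simp [← hfx]
    · simpa using (hx hfx).mul_const (f x)
  have hlogc : Tendsto (fun k => log (c k)) atTop (𝓝 0) := by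
    simpa using hclim.log one_ne_zero
  have hsplit : ∀ k, ∫ x, g k x * f x * log (c k * g k x * f x) ∂μ =
      ∫ x, g k x * f x * log (g k x * f x) ∂μ + log (c k) * ∫ x, g k x * f x ∂μ := by
    intro k
    simp_rw [mul_assoc (c k)]
    refine integral_mul_log_const_mul (hc k).ne'
      (hf.mono' (hmeas k).aestronglyMeasurable ?_)
      (integrable_mul_log_of_le hflogf (hmeas k) (h0 k) (hle k))
    filter_upwards [h0 k, hle k] with x hx0 hxf
    rwa [norm_of_nonneg hx0]
  simp_rw [hsplit]
  simpa using (tendsto_integral_mul_log_of_le hflogf hmeas h0 hle hlim).add (hlogc.mul hgf)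

theorem entropy_convergence {X : Type*} [MeasurableSpace X] (μ : Measure X)
    [IsFiniteMeasure μ] (f : X → ℝ) (hf : Integrable f μ) (hf0 : ∀ x, 0 ≤ f x)
    (g : ℕ → X → ℝ) (hgmeas : ∀ k, Measurable (g k))
    (hg01 : ∀ k x, g k x ∈ Set.Icc (0:ℝ) 1)
    (hgmono : ∀ x, Monotone fun k => g k x)
    (hglim : ∀ᵐ x ∂μ, 0 < f x → Tendsto (fun k => g k x) atTop (nhds 1))
    (hgf : Tendsto (fun k => ∫ x, g k x * f x ∂μ) atTop (nhds (∫ x, f x ∂μ)))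
    (c : ℕ → ℝ) (hc : ∀ k, 0 < c k) (hclim : Tendsto c atTop (nhds 1))
    (hflogf : Integrable (fun x => f x * Real.log (f x)) μ) :
    Tendsto (fun k => ∫ x, g k x * f x * Real.log (c k * g k x * f x) ∂μ)
      atTop (nhds (∫ x, f x * Real.log (f x) ∂μ)) :=
  entropy_convergence_general μ f hf hf0 g hgmeas hg01 hglim hgf c hc hclim hflogf
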